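/- arXiv:1503.04622 — 3 statements merged into one kernel-verified Lean document; each statement's English description precedes it below -/
import Mathlib

section
/- Suppose f : ℝ → [0,∞) satisfies ∫_{|y|≤1} (1 - y²) f(y) dy > 0 and ∫ e^{-γ(y²-1)}(1-y²) f(y) dy is finite for all ξ ≥ γ > 0. Then ∫_ℝ e^{-ξ(y²-1)}(1-y²) f(y) dy → +∞ as ξ → ∞. -/
open MeasureTheory Real Filter

/-- If `∫_{|y|≤1} (1-y²) f > 0` then `∫ e^{-ξ(y²-1)}(1-y²) f(y) dy → +∞` as `ξ → ∞`. -/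
theorem stmt7 (f : ℝ → ℝ) (hmeas : Measurable f) (hnn : ∀ y, 0 ≤ f y) (γ : ℝ) (hγ : 0 < γ)
    (hpos : 0 < ∫ y in Set.Icc (-1 : ℝ) 1, (1 - y ^ 2) * f y)
    (hint : ∀ ξ ≥ γ, Integrable (fun y => Real.exp (-ξ * (y ^ 2 - 1)) * (1 - y ^ 2) * f y)) :
    Tendsto (fun ξ : ℝ => ∫ y : ℝ, Real.exp (-ξ * (y ^ 2 - 1)) * (1 - y ^ 2) * f y)
      atTop atTop := by
  set g : ℝ → ℝ := fun y => (1 - y ^ 2) * f y with hgdef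
  -- integrability of g on Icc
  have hgInt : IntegrableOn g (Set.Icc (-1 : ℝ) 1) := by
    by_contra h
    rw [MeasureTheory.integral_undef h] at hpos
    exact lt_irrefl 0 hpos
  have hgIoo : IntegrableOn g (Set.Ioo (-1 : ℝ) 1) :=
    hgInt.mono_set Set.Ioo_subset_Icc_self
  -- the increasing sets
  set s : ℕ → Set ℝ := fun n => {y : ℝ | ((n : ℝ) + 1)⁻¹ ≤ 1 - y ^ 2} with hsdef
  have hsm : ∀ n, MeasurableSet (s n) := by
    intro n
    exact measurableSet_le measurable_const (by fun_prop)
  have hmono : Monotone s := by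
    intro n m hnm y hy
    simp only [hsdef, Set.mem_setOf_eq] at hy ⊢
    have hc : ((n : ℝ)) ≤ (m : ℝ) := (Nat.cast_le (α := ℝ)).mpr hnm
    have : ((m : ℝ) + 1)⁻¹ ≤ ((n : ℝ) + 1)⁻¹ := by
      apply inv_anti₀ (by positivity)
      linarith
    linarith
  have hU : (⋃ n : ℕ, s n) = Set.Ioo (-1 : ℝ) 1 := by
    ext y
    simp only [hsdef, Set.mem_iUnion, Set.mem_setOf_eq, Set.mem_Ioo]
    constructor
    · rintro ⟨n, hn⟩
      have h1 : (0 : ℝ) < 1 - y ^ 2 := lt_of_lt_of_le (by positivity) hn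
      constructor <;> nlinarith
    · rintro ⟨h1, h2⟩
      have h0 : (0 : ℝ) < 1 - y ^ 2 := by nlinarith
      obtain ⟨n, hn⟩ := exists_nat_one_div_lt h0
      refine ⟨n, ?_⟩
      rw [one_div] at hn
      exact hn.le
  -- find n with positive integral over s n
  have htend : Tendsto (fun n => ∫ y in s n, g y) atTop
      (nhds (∫ y in ⋃ n, s n, g y)) := by
    apply MeasureTheory.tendsto_setIntegral_of_monotone hsm hmono
    rw [hU]; exact hgIoo
  have hIoo_pos : 0 < ∫ y in ⋃ n, s n, g y := by
    rw [hU, ← MeasureTheory.integral_Icc_eq_integral_Ioo]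
    exact hpos
  obtain ⟨n, hn⟩ := (htend.eventually (eventually_gt_nhds hIoo_pos)).exists
  set δ : ℝ := ((n : ℝ) + 1)⁻¹ with hδdef
  have hδ : 0 < δ := by positivity
  set a : ℝ := ∫ y in s n, g y with hadef
  have ha : 0 < a := hn
  have hsub : s n ⊆ Set.Ioo (-1 : ℝ) 1 := hU ▸ Set.subset_iUnion s n
  -- the dominating constant
  set C : ℝ := ∫ y, |Real.exp (-γ * (y ^ 2 - 1)) * (1 - y ^ 2) * f y| with hCdef
  have hγint := hint γ le_rfl
  -- key bound
  have key : ∀ ξ ≥ γ, a * Real.exp (δ * ξ) - C ≤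
      ∫ y : ℝ, Real.exp (-ξ * (y ^ 2 - 1)) * (1 - y ^ 2) * f y := by
    intro ξ hξ
    have hξ0 : 0 < ξ := lt_of_lt_of_le hγ hξ
    have hi := hint ξ hξ
    set h : ℝ → ℝ := fun y => Real.exp (-ξ * (y ^ 2 - 1)) * (1 - y ^ 2) * f y with hhdef
    have hsplit : (∫ y in Set.Ioo (-1 : ℝ) 1, h y) +
        (∫ y in (Set.Ioo (-1 : ℝ) 1)ᶜ, h y) = ∫ y, h y :=
      MeasureTheory.integral_add_compl measurableSet_Ioo hi
    -- bound on Ioo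
    have hb1 : a * Real.exp (δ * ξ) ≤ ∫ y in Set.Ioo (-1 : ℝ) 1, h y := by
      have step1 : ∫ y in s n, Real.exp (δ * ξ) * g y ≤ ∫ y in s n, h y := by
        apply MeasureTheory.setIntegral_mono_on
        · exact (hgIoo.mono_set hsub).const_mul _
        · exact hi.integrableOn
        · exact hsm n
        · intro y hy
          have hyδ : δ ≤ 1 - y ^ 2 := hy
          have h2 : 0 ≤ (1 - y ^ 2) * f y :=
            mul_nonneg (by linarith [hδ.le.trans hyδ]) (hnn y)
          have h1 : Real.exp (δ * ξ) ≤ Real.exp (-ξ * (y ^ 2 - 1)) := by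
            apply Real.exp_le_exp.2; nlinarith
          calc Real.exp (δ * ξ) * g y
              ≤ Real.exp (-ξ * (y ^ 2 - 1)) * ((1 - y ^ 2) * f y) :=
                mul_le_mul_of_nonneg_right h1 h2
            _ = h y := by rw [hhdef]; ring
      have step2 : ∫ y in s n, h y ≤ ∫ y in Set.Ioo (-1 : ℝ) 1, h y := by
        apply MeasureTheory.setIntegral_mono_set hi.integrableOn
        · filter_upwards [MeasureTheory.ae_restrict_mem measurableSet_Ioo] with y hy
          have : (0 : ℝ) ≤ 1 - y ^ 2 := by
            rcases Set.mem_Ioo.1 hy with ⟨h1, h2⟩; nlinarith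
          exact mul_nonneg (mul_nonneg (Real.exp_nonneg _) this) (hnn y)
        · exact HasSubset.Subset.eventuallyLE hsub
      have step0 : ∫ y in s n, Real.exp (δ * ξ) * g y = Real.exp (δ * ξ) * a := by
        rw [hadef, MeasureTheory.integral_const_mul]
      linarith [step1, step2, step0 ▸ step1]
    -- bound on the complement
    have hb2 : -C ≤ ∫ y in (Set.Ioo (-1 : ℝ) 1)ᶜ, h y := by
      have habs : Integrable (fun y => |Real.exp (-γ * (y ^ 2 - 1)) * (1 - y ^ 2) * f y|) :=
        hγint.abs
      have step1 : ∫ y in (Set.Ioo (-1 : ℝ) 1)ᶜ,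
          (-(|Real.exp (-γ * (y ^ 2 - 1)) * (1 - y ^ 2) * f y|)) ≤
          ∫ y in (Set.Ioo (-1 : ℝ) 1)ᶜ, h y := by
        apply MeasureTheory.setIntegral_mono_on
        · exact habs.neg.integrableOn
        · exact hi.integrableOn
        · exact measurableSet_Ioo.compl
        · intro y hy
          have hy2 : 1 ≤ y ^ 2 := by
            simp only [Set.mem_compl_iff, Set.mem_Ioo, not_and_or, not_lt] at hy
            rcases hy with h1 | h2 <;> nlinarith
          have e1 : Real.exp (-ξ * (y ^ 2 - 1)) ≤ Real.exp (-γ * (y ^ 2 - 1)) := by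
            apply Real.exp_le_exp.2; nlinarith
          have hprod : 0 ≤ (y ^ 2 - 1) * f y := mul_nonneg (by linarith) (hnn y)
          have h3 : -(h y) ≤ Real.exp (-γ * (y ^ 2 - 1)) * ((y ^ 2 - 1) * f y) := by
            have : -(h y) = Real.exp (-ξ * (y ^ 2 - 1)) * ((y ^ 2 - 1) * f y) := by
              rw [hhdef]; ring
            rw [this]
            exact mul_le_mul_of_nonneg_right e1 hprod
          have h4 : Real.exp (-γ * (y ^ 2 - 1)) * ((y ^ 2 - 1) * f y) ≤
              |Real.exp (-γ * (y ^ 2 - 1)) * (1 - y ^ 2) * f y| := by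
            have : Real.exp (-γ * (y ^ 2 - 1)) * ((y ^ 2 - 1) * f y) =
                -(Real.exp (-γ * (y ^ 2 - 1)) * (1 - y ^ 2) * f y) := by ring
            rw [this]
            exact neg_le_abs _
          linarith
      have step2 : -C ≤ ∫ y in (Set.Ioo (-1 : ℝ) 1)ᶜ,
          (-(|Real.exp (-γ * (y ^ 2 - 1)) * (1 - y ^ 2) * f y|)) := by
        rw [MeasureTheory.integral_neg, neg_le_neg_iff, hCdef]
        apply MeasureTheory.setIntegral_le_integral habs
        filter_upwards with y using abs_nonneg _
      linarith
    have : h = fun y => Real.exp (-ξ * (y ^ 2 - 1)) * (1 - y ^ 2) * f y := hhdef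
    rw [← hsplit]
    linarith
  -- conclude
  have hlim : Tendsto (fun ξ : ℝ => a * Real.exp (δ * ξ) - C) atTop atTop := by
    have h1 : Tendsto (fun ξ : ℝ => δ * ξ) atTop atTop :=
      tendsto_id.const_mul_atTop hδ
    have h2 : Tendsto (fun ξ : ℝ => Real.exp (δ * ξ)) atTop atTop :=
      Real.tendsto_exp_atTop.comp h1
    have h3 : Tendsto (fun ξ : ℝ => a * Real.exp (δ * ξ)) atTop atTop :=
      h2.const_mul_atTop ha
    simpa [sub_eq_add_neg] using tendsto_atTop_add_const_right atTop (-C) h3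
  exact tendsto_atTop_mono' atTop (eventually_atTop.2 ⟨γ, key⟩) hlim
end

section
/- For the relativistic energy φ(v) = √(1+v²) − 1, the function f(y) = |y|(y²+1)/√((y²+1)² − 1) satisfies: (i) f(y) ≤ K e^{b y²} for suitable K ≥ 0, b > 0; (ii) ∫_ℝ (1 - y²) f(y) dy < 0 (interpreted via ∫ e^{-γ y²}(1-y²)f(y)dy < 0 for small γ); and (iii) ∫_{|y|≤1} (1 - y²) f(y) dy > 0. -/
/-!
Away from `y = 0` the weight is `(y² + 1) / √(y² + 2)`: it lies between `0` and `y² + 1`, is at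
least `1` for `y ≥ 1`, and is positive off `0`. The quadratic bound gives (i) and makes the
Gaussian-damped integrand integrable. For (ii), with `γ < 1/16` the integrand is at most the
step function `1` on `[-1, 1]`, `-3/e` on `[2, 4]` and `0` elsewhere, whose integral `2 - 6/e` is
negative because `e < 3`. For (iii) the integrand is nonnegative on `[-1, 1]` and positive on
`(0, 1)`.
-/

open MeasureTheory Real Set

noncomputable def relativisticWeight (y : ℝ) : ℝ :=
  |y| * (y ^ 2 + 1) / √((y ^ 2 + 1) ^ 2 - 1)

namespace relativisticWeight

lemma nonneg (y : ℝ) : 0 ≤ relativisticWeight y := by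
  unfold relativisticWeight; positivity

lemma le_sq_add_one (y : ℝ) : relativisticWeight y ≤ y ^ 2 + 1 := by
  have hy : |y| ≤ √((y ^ 2 + 1) ^ 2 - 1) :=
    Real.abs_le_sqrt (by nlinarith [sq_nonneg y])
  calc relativisticWeight y = (y ^ 2 + 1) * (|y| / √((y ^ 2 + 1) ^ 2 - 1)) := by
        unfold relativisticWeight; ring
    _ ≤ (y ^ 2 + 1) * 1 := by gcongr; exact div_le_one_of_le₀ hy (sqrt_nonneg _)
    _ = y ^ 2 + 1 := mul_one _

lemma eq_of_ne_zero {y : ℝ} (hy : y ≠ 0) :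
    relativisticWeight y = (y ^ 2 + 1) / √(y ^ 2 + 2) := by
  rw [relativisticWeight, show (y ^ 2 + 1) ^ 2 - 1 = y ^ 2 * (y ^ 2 + 2) by ring,
    sqrt_mul (sq_nonneg y), sqrt_sq_eq_abs, mul_div_mul_left _ _ (abs_ne_zero.2 hy)]

lemma pos_of_ne_zero {y : ℝ} (hy : y ≠ 0) : 0 < relativisticWeight y := by
  rw [eq_of_ne_zero hy]; positivity

lemma one_le {y : ℝ} (hy : 1 ≤ y) : 1 ≤ relativisticWeight y := by
  rw [eq_of_ne_zero (by positivity), one_le_div₀ (by positivity), sqrt_le_left (by positivity)]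
  nlinarith

lemma measurable : Measurable relativisticWeight := by
  unfold relativisticWeight; fun_prop

end relativisticWeight

lemma integrable_sq_add_one_sq_mul_exp_neg_mul_sq {b : ℝ} (hb : 0 < b) :
    Integrable fun x : ℝ => (x ^ 2 + 1) ^ 2 * exp (-b * x ^ 2) := by
  have hpow (n : ℕ) : Integrable fun x : ℝ => x ^ n * exp (-b * x ^ 2) := by
    simpa [rpow_natCast] using
      integrable_rpow_mul_exp_neg_mul_sq hb (s := n) (by linarith [n.cast_nonneg (α := ℝ)])
  refine (((hpow 4).add ((hpow 2).const_mul 2)).add (integrable_exp_neg_mul_sq hb)).congr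
    (ae_of_all _ fun x => ?_)
  simp only [Pi.add_apply]
  ring

lemma abs_one_sub_sq_mul_le {y c : ℝ} (hc0 : 0 ≤ c) (hc : c ≤ y ^ 2 + 1) :
    |(1 - y ^ 2) * c| ≤ (y ^ 2 + 1) ^ 2 := by
  have h : |1 - y ^ 2| ≤ y ^ 2 + 1 := abs_le.2 ⟨by nlinarith [sq_nonneg y], by nlinarith⟩
  rw [abs_mul, abs_of_nonneg hc0, sq (y ^ 2 + 1)]
  exact mul_le_mul h hc hc0 (by positivity)

section QuadraticGrowth

variable {g : ℝ → ℝ}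

lemma integrable_exp_neg_mul_sq_mul_one_sub_sq_mul (hgm : Measurable g)
    (hg0 : ∀ y, 0 ≤ g y) (hg : ∀ y, g y ≤ y ^ 2 + 1) {γ : ℝ} (hγ : 0 < γ) :
    Integrable (fun y => exp (-γ * y ^ 2) * (1 - y ^ 2) * g y) := by
  refine (integrable_sq_add_one_sq_mul_exp_neg_mul_sq hγ).mono' (by fun_prop)
    (ae_of_all _ fun y => ?_)
  rw [mul_assoc, norm_mul, norm_of_nonneg (exp_pos _).le, norm_eq_abs, mul_comm]
  gcongr
  exact abs_one_sub_sq_mul_le (hg0 y) (hg y)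

lemma exp_neg_mul_sq_mul_one_sub_sq_mul_le_step (hg0 : ∀ y, 0 ≤ g y)
    (hg : ∀ y, g y ≤ y ^ 2 + 1) (hg_one : ∀ y, 1 ≤ y → 1 ≤ g y) {γ : ℝ} (hγ : 0 < γ)
    (hγ_lt : γ < 1 / 16) (y : ℝ) :
    exp (-γ * y ^ 2) * (1 - y ^ 2) * g y ≤
      (Icc (-1) 1).indicator 1 y - (Icc 2 4).indicator (fun _ => 3 * exp (-1)) y := by
  have hE : 0 < exp (-γ * y ^ 2) := exp_pos _
  by_cases hI : y ∈ Icc (-1 : ℝ) 1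
  · have hJ : y ∉ Icc (2 : ℝ) 4 := fun hJ => by linarith [hI.2, hJ.1]
    rw [indicator_of_mem hI, indicator_of_notMem hJ, Pi.one_apply, sub_zero]
    have hE1 : exp (-γ * y ^ 2) ≤ 1 := exp_le_one_iff.2 (by nlinarith [sq_nonneg y])
    have hy : 0 ≤ 1 - y ^ 2 := by nlinarith [hI.1, hI.2]
    calc exp (-γ * y ^ 2) * (1 - y ^ 2) * g y ≤ 1 * (1 - y ^ 2) * (y ^ 2 + 1) := by
          gcongr; exacts [hg0 y, hg y]
      _ ≤ 1 := by nlinarith [sq_nonneg (y ^ 2)]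
  rw [indicator_of_notMem hI, zero_sub]
  by_cases hJ : y ∈ Icc (2 : ℝ) 4
  · rw [indicator_of_mem hJ]
    have hE1 : exp (-1) ≤ exp (-γ * y ^ 2) := exp_le_exp.2 (by nlinarith [hJ.1, hJ.2])
    have hy : 1 - y ^ 2 ≤ -3 := by nlinarith [hJ.1]
    have hgy := hg_one y (by linarith [hJ.1])
    calc exp (-γ * y ^ 2) * (1 - y ^ 2) * g y ≤ exp (-γ * y ^ 2) * (1 - y ^ 2) * 1 :=
          mul_le_mul_of_nonpos_left hgy (mul_nonpos_of_nonneg_of_nonpos hE.le (by linarith))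
      _ ≤ -(3 * exp (-1)) := by nlinarith
  · rw [indicator_of_notMem hJ, neg_zero]
    have hy : 1 - y ^ 2 ≤ 0 := by
      simp only [mem_Icc, not_and_or, not_le] at hI
      rcases hI with h | h <;> nlinarith
    exact mul_nonpos_of_nonpos_of_nonneg (mul_nonpos_of_nonneg_of_nonpos hE.le hy) (hg0 y)

lemma integral_exp_neg_mul_sq_mul_one_sub_sq_mul_neg (hgm : Measurable g)
    (hg0 : ∀ y, 0 ≤ g y) (hg : ∀ y, g y ≤ y ^ 2 + 1) (hg_one : ∀ y, 1 ≤ y → 1 ≤ g y)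
    {γ : ℝ} (hγ : 0 < γ) (hγ_lt : γ < 1 / 16) :
    ∫ y, exp (-γ * y ^ 2) * (1 - y ^ 2) * g y < 0 := by
  have hI : Integrable ((Icc (-1 : ℝ) 1).indicator 1) :=
    (integrableOn_const (C := (1 : ℝ)) measure_Icc_lt_top.ne).integrable_indicator
      measurableSet_Icc
  have hJ : Integrable ((Icc (2 : ℝ) 4).indicator fun _ => 3 * exp (-1)) :=
    (integrableOn_const measure_Icc_lt_top.ne).integrable_indicator measurableSet_Icc
  calc ∫ y, exp (-γ * y ^ 2) * (1 - y ^ 2) * g y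
      ≤ ∫ y, ((Icc (-1) 1).indicator 1 y - (Icc 2 4).indicator (fun _ => 3 * exp (-1)) y) :=
        integral_mono (integrable_exp_neg_mul_sq_mul_one_sub_sq_mul hgm hg0 hg hγ) (hI.sub hJ)
          (exp_neg_mul_sq_mul_one_sub_sq_mul_le_step hg0 hg hg_one hγ hγ_lt)
    _ = 2 - 6 * exp (-1) := by
        rw [integral_sub hI hJ, integral_indicator_one measurableSet_Icc,
          integral_indicator_const _ measurableSet_Icc, measureReal_def, measureReal_def,
          volume_Icc, volume_Icc, smul_eq_mul]
        norm_num
        ring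
    _ < 0 := by
        rw [exp_neg, sub_neg, lt_mul_inv_iff₀ (exp_pos 1)]
        linarith [exp_one_lt_d9]

lemma setIntegral_Icc_one_sub_sq_mul_pos (hgm : Measurable g) (hg0 : ∀ y, 0 ≤ g y)
    (hg : ∀ y, g y ≤ y ^ 2 + 1) (hpos : ∀ y ∈ Ioo (0 : ℝ) 1, 0 < g y) :
    0 < ∫ y in Icc (-1) 1, (1 - y ^ 2) * g y := by
  have hnonneg : 0 ≤ᵐ[volume.restrict (Icc (-1 : ℝ) 1)] fun y => (1 - y ^ 2) * g y :=
    (ae_restrict_iff' measurableSet_Icc).2 <| ae_of_all _ fun y hy =>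
      mul_nonneg (by nlinarith [hy.1, hy.2]) (hg0 y)
  have hint : IntegrableOn (fun y => (1 - y ^ 2) * g y) (Icc (-1) 1) :=
    ((by fun_prop : Continuous fun y : ℝ => (y ^ 2 + 1) ^ 2).integrableOn_Icc).mono'
      (by fun_prop) (ae_of_all _ fun y => abs_one_sub_sq_mul_le (hg0 y) (hg y))
  have hsupp : Ioo (0 : ℝ) 1 ⊆ Function.support (fun y => (1 - y ^ 2) * g y) ∩ Icc (-1) 1 :=
    fun y hy => ⟨(mul_pos (by nlinarith [hy.1, hy.2]) (hpos y hy)).ne',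
      ⟨by linarith [hy.1], hy.2.le⟩⟩
  rw [setIntegral_pos_iff_support_of_nonneg_ae hnonneg hint]
  exact (by simp : (0 : ENNReal) < volume (Ioo (0 : ℝ) 1)).trans_le (measure_mono hsupp)

end QuadraticGrowth

/-- For the relativistic energy `φ(v) = √(1+v²) - 1`, the function
`f(y) = |y|(y²+1)/√((y²+1)²-1)` satisfies the exponential bound, the negativity
condition `∫ e^{-γy²}(1-y²) f < 0` for small `γ > 0`, and `∫_{|y|≤1}(1-y²) f > 0`. -/
theorem stmt9 (f : ℝ → ℝ)
    (hf : ∀ y, f y = |y| * (y ^ 2 + 1) / Real.sqrt ((y ^ 2 + 1) ^ 2 - 1)) :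
    (∃ K ≥ (0 : ℝ), ∃ b > (0 : ℝ), ∀ y, f y ≤ K * Real.exp (b * y ^ 2)) ∧
    (∃ γ₀ > (0 : ℝ), ∀ γ ∈ Set.Ioo (0 : ℝ) γ₀,
      (∫ y : ℝ, Real.exp (-γ * y ^ 2) * (1 - y ^ 2) * f y) < 0) ∧
    0 < ∫ y in Set.Icc (-1 : ℝ) 1, (1 - y ^ 2) * f y := by
  obtain rfl : f = relativisticWeight := funext hf
  open relativisticWeight in
  refine ⟨⟨1, zero_le_one, 1, one_pos, fun y => ?_⟩,
    ⟨1 / 16, by norm_num, fun γ hγ => integral_exp_neg_mul_sq_mul_one_sub_sq_mul_neg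
      measurable nonneg le_sq_add_one (fun _ => one_le) hγ.1 hγ.2⟩,
    setIntegral_Icc_one_sub_sq_mul_pos measurable nonneg le_sq_add_one
      fun y hy => pos_of_ne_zero hy.1.ne'⟩
  calc relativisticWeight y ≤ y ^ 2 + 1 := le_sq_add_one y
    _ ≤ 1 * exp (1 * y ^ 2) := by rw [one_mul, one_mul]; exact add_one_le_exp _
end

section
/- Under the equation ∫_ℝ (1 − φ(v)) e^{-zφ(v)} dv = 0, with φ even, convex, C¹, φ(0)=0, φ not identically 0, and ∫ e^{-γφ(v)}(1+φ(v))dv < ∞ for some γ > 0, there is at most one real solution z ≥ γ, because z ↦ ∫(1 − φ(v)) e^{-z(φ(v)−1)} dv is strictly increasing. -/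
open MeasureTheory Real

/-- The map `z ↦ ∫ (1 - φ(v)) e^{-z(φ(v)-1)} dv` is strictly increasing on `[γ, ∞)`, hence
the equation `∫ (1 - φ(v)) e^{-zφ(v)} dv = 0` has at most one solution `z ≥ γ`. -/
theorem stmt19 (φ : ℝ → ℝ) (heven : ∀ v, φ (-v) = φ v)
    (hconv : ConvexOn ℝ Set.univ φ) (hC1 : ContDiff ℝ 1 φ) (h0 : φ 0 = 0)
    (hnn : ∀ v, 0 ≤ φ v) (hne : ∃ v, φ v ≠ 0)
    (γ : ℝ) (hγ : 0 < γ)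
    (hint : Integrable (fun v => Real.exp (-γ * φ v) * (1 + φ v))) :
    StrictMonoOn (fun z => ∫ v : ℝ, (1 - φ v) * Real.exp (-z * (φ v - 1))) (Set.Ici γ) ∧
    ∀ z₁ ∈ Set.Ici γ, ∀ z₂ ∈ Set.Ici γ,
      (∫ v : ℝ, (1 - φ v) * Real.exp (-z₁ * φ v)) = 0 →
      (∫ v : ℝ, (1 - φ v) * Real.exp (-z₂ * φ v)) = 0 → z₁ = z₂ := by
  have hcont : Continuous φ := hC1.continuous
  -- integrability for each z ≥ γ
  have hI : ∀ z : ℝ, γ ≤ z →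
      Integrable (fun v => (1 - φ v) * Real.exp (-z * (φ v - 1))) := by
    intro z hz
    apply Integrable.mono' ((hint.const_mul (Real.exp z)))
    · exact (Continuous.mul (by continuity) (by continuity)).aestronglyMeasurable
    · filter_upwards with v
      have h1 : |1 - φ v| ≤ 1 + φ v := by
        rw [abs_le]; constructor <;> nlinarith [hnn v]
      have h2 : Real.exp (-z * (φ v - 1)) = Real.exp z * Real.exp (-z * φ v) := by
        rw [← Real.exp_add]; ring_nf
      have h3 : Real.exp (-z * φ v) ≤ Real.exp (-γ * φ v) := by
        apply Real.exp_le_exp.2; nlinarith [hnn v]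
      rw [norm_mul, Real.norm_eq_abs, Real.norm_eq_abs, Real.abs_exp, h2]
      calc |1 - φ v| * (Real.exp z * Real.exp (-z * φ v))
          ≤ (1 + φ v) * (Real.exp z * Real.exp (-γ * φ v)) := by
            exact mul_le_mul h1 (mul_le_mul_of_nonneg_left h3 (Real.exp_pos z).le)
              (by positivity) (by linarith [hnn v])
        _ = Real.exp z * (Real.exp (-γ * φ v) * (1 + φ v)) := by ring
  -- strict monotonicity
  have hSM : StrictMonoOn (fun z => ∫ v : ℝ, (1 - φ v) * Real.exp (-z * (φ v - 1)))
      (Set.Ici γ) := by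
    intro z₁ hz₁ z₂ hz₂ h12
    simp only [Set.mem_Ici] at hz₁ hz₂
    have hI₁ := hI z₁ hz₁
    have hI₂ := hI z₂ hz₂
    rw [← sub_pos, ← integral_sub hI₂ hI₁]
    set d : ℝ → ℝ := fun v =>
      (1 - φ v) * Real.exp (-z₂ * (φ v - 1)) - (1 - φ v) * Real.exp (-z₁ * (φ v - 1)) with hd
    have hdnn : ∀ v, 0 ≤ d v := by
      intro v
      rcases lt_trichotomy (φ v) 1 with h | h | h
      · have : Real.exp (-z₁ * (φ v - 1)) < Real.exp (-z₂ * (φ v - 1)) := by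
          apply Real.exp_lt_exp.2; nlinarith
        have h1 : 0 < 1 - φ v := by linarith
        simp only [hd]; nlinarith
      · simp [hd, h]
      · have : Real.exp (-z₂ * (φ v - 1)) < Real.exp (-z₁ * (φ v - 1)) := by
          apply Real.exp_lt_exp.2; nlinarith
        have h1 : 1 - φ v < 0 := by linarith
        simp only [hd]; nlinarith
    have hdpos : ∀ v, φ v < 1 → 0 < d v := by
      intro v h
      have : Real.exp (-z₁ * (φ v - 1)) < Real.exp (-z₂ * (φ v - 1)) := by
        apply Real.exp_lt_exp.2; nlinarith
      have h1 : 0 < 1 - φ v := by linarith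
      simp only [hd]; nlinarith
    rw [integral_pos_iff_support_of_nonneg hdnn (hI₂.sub hI₁)]
    have hopen : IsOpen {v : ℝ | φ v < 1} := isOpen_lt hcont continuous_const
    have hsub : {v : ℝ | φ v < 1} ⊆ Function.support d := by
      intro v hv; exact (hdpos v hv).ne'
    calc (0 : ENNReal) < volume {v : ℝ | φ v < 1} :=
          hopen.measure_pos volume ⟨0, by simp [h0]⟩
      _ ≤ volume (Function.support d) := measure_mono hsub
  refine ⟨hSM, ?_⟩
  intro z₁ hz₁ z₂ hz₂ e₁ e₂
  have key : ∀ z : ℝ, (∫ v : ℝ, (1 - φ v) * Real.exp (-z * φ v)) = 0 →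
      (∫ v : ℝ, (1 - φ v) * Real.exp (-z * (φ v - 1))) = 0 := by
    intro z hzero
    have : ∀ v, (1 - φ v) * Real.exp (-z * (φ v - 1)) =
        ((1 - φ v) * Real.exp (-z * φ v)) * Real.exp z := by
      intro v; rw [mul_assoc, ← Real.exp_add]; ring_nf
    simp_rw [this]
    rw [integral_mul_const, hzero, zero_mul]
  exact hSM.injOn hz₁ hz₂ (by rw [key z₁ e₁, key z₂ e₂])
end
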